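/- Any sample Fréchet mean Ā and sample Fréchet median M computed with the adjacency spectral pseudometric satisfy max{e(Ā), e(M)} ≤ 9·ē_N, where ē_N is the sample mean number of edges of the sample graphs (assuming there exists k₀ with ‖λ(A^{(k₀)})‖ ≤ ‖λ̄‖). -/

import Mathlib

open Finset

/-- `A` is the adjacency matrix of a simple labeled graph on `n` vertices:
symmetric, `{0,1}`-valued, zero diagonal. -/
def IsAdj {n : ℕ} (A : Matrix (Fin n) (Fin n) ℝ) : Prop :=
  (∀ i j, A i j = 0 ∨ A i j = 1) ∧ (∀ i j, A i j = A j i) ∧ (∀ i, A i i = 0)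

/-- Number of edges `e(A) = ∑_{i<j} a_{ij}`. -/
def edges {n : ℕ} (A : Matrix (Fin n) (Fin n) ℝ) : ℝ :=
  ∑ i : Fin n, ∑ j : Fin n, if i < j then A i j else 0

/-- Hamming distance `d_H(A,B) = ∑_{i<j} |a_{ij} - b_{ij}|`. -/
def hammingD {n : ℕ} (A B : Matrix (Fin n) (Fin n) ℝ) : ℝ :=
  ∑ i : Fin n, ∑ j : Fin n, if i < j then |A i j - B i j| else 0

/-- Euclidean norm of a vector in `ℝⁿ`. -/
noncomputable def vnorm {n : ℕ} (v : Fin n → ℝ) : ℝ :=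
  Real.sqrt (∑ i : Fin n, v i ^ 2)

/-!
Write `λ(A)` for the spectrum of `A` as a vector of `EuclideanSpace ℝ (Fin n)`; for a simple
graph `‖λ(A)‖² = tr A² = 2 e(A)`. Comparing the mean with the empty graph and expanding the
squares gives `N ‖λ(Ā)‖ ≤ 2 ‖∑ₖ λ(A⁽ᵏ⁾)‖`; comparing the median with `A⁽ᵏ⁰⁾` and using the
triangle inequality twice gives `N ‖λ(M)‖ ≤ 3 ∑ₖ ‖λ(A⁽ᵏ⁾)‖`. By Cauchy–Schwarz,
`(∑ₖ ‖λ(A⁽ᵏ⁾)‖)² ≤ N ∑ₖ ‖λ(A⁽ᵏ⁾)‖² = 2 N² ē_N`, so a bound `N ‖λ(B)‖ ≤ c ∑ₖ ‖λ(A⁽ᵏ⁾)‖`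
yields `e(B) ≤ c² ē_N`.
-/

namespace Matrix.IsHermitian
variable {𝕜 m : Type*} [RCLike 𝕜] [Fintype m] [DecidableEq m] {A : Matrix m m 𝕜}

theorem trace_mul_self_eq_sum_sq_eigenvalues (hA : A.IsHermitian) :
    (A * A).trace = ∑ i, (hA.eigenvalues i : 𝕜) ^ 2 := by
  conv_lhs => rw [hA.spectral_theorem, ← map_mul, Unitary.conjStarAlgAut_apply, trace_mul_cycle,
    Unitary.coe_star_mul_self, one_mul, diagonal_mul_diagonal, trace_diagonal]
  simp [sq]

end Matrix.IsHermitian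

lemma vnorm_eq_norm_toLp {n : ℕ} (v : Fin n → ℝ) : vnorm v = ‖WithLp.toLp 2 v‖ := by
  simp [vnorm, EuclideanSpace.norm_eq]

namespace IsAdj
variable {n : ℕ} {A : Matrix (Fin n) (Fin n) ℝ}

theorem sum_sum_eq_two_mul_edges (h : IsAdj A) : ∑ i, ∑ j, A i j = 2 * edges A := by
  obtain ⟨-, hsymm, hdiag⟩ := h
  have hsplit : ∀ i j, A i j = (if i < j then A i j else 0) + (if j < i then A j i else 0) := by
    intro i j
    rcases lt_trichotomy i j with h | rfl | h
    · simp [h, h.not_gt]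
    · simp [hdiag]
    · simp [h, h.not_gt, hsymm i j]
  rw [sum_congr rfl fun i _ => sum_congr rfl fun j _ => hsplit i j]
  simp only [sum_add_distrib]
  rw [sum_comm (f := fun i j => if j < i then A j i else 0), edges]
  ring

theorem trace_mul_self_eq_two_mul_edges (h : IsAdj A) : (A * A).trace = 2 * edges A := by
  rw [← h.sum_sum_eq_two_mul_edges, Matrix.trace]
  refine sum_congr rfl fun i _ => ?_
  rw [Matrix.diag_apply, Matrix.mul_apply]
  refine sum_congr rfl fun j _ => ?_
  rw [← h.2.1 i j]
  rcases h.1 i j with h | h <;> simp [h]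

theorem edges_nonneg (h : IsAdj A) : 0 ≤ edges A :=
  sum_nonneg fun i _ => sum_nonneg fun j _ => by rcases h.1 i j with h | h <;> simp [h, apply_ite]

theorem vnorm_eigenvalues_sq (h : IsAdj A) (hA : A.IsHermitian) :
    vnorm hA.eigenvalues ^ 2 = 2 * edges A := by
  rw [vnorm, Real.sq_sqrt (sum_nonneg fun _ _ => sq_nonneg _), ← h.trace_mul_self_eq_two_mul_edges,
    hA.trace_mul_self_eq_sum_sq_eigenvalues]
  rfl

end IsAdj

theorem isAdj_zero {n : ℕ} : IsAdj (0 : Matrix (Fin n) (Fin n) ℝ) :=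
  ⟨fun _ _ => .inl rfl, fun _ _ => rfl, fun _ => rfl⟩

section FrechetBounds
variable {ι E : Type*} [Fintype ι] [NormedAddCommGroup E] [InnerProductSpace ℝ E] (y : ι → E)

theorem card_mul_norm_le_of_sum_norm_sub_sq_le {x : E}
    (h : ∑ k, ‖x - y k‖ ^ 2 ≤ ∑ k, ‖y k‖ ^ 2) :
    Fintype.card ι * ‖x‖ ≤ 2 * ‖∑ k, y k‖ := by
  have hexpand : ∑ k, ‖x - y k‖ ^ 2 =
      Fintype.card ι * ‖x‖ ^ 2 - 2 * inner ℝ x (∑ k, y k) + ∑ k, ‖y k‖ ^ 2 := by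
    simp only [norm_sub_sq_real, sum_add_distrib, sum_sub_distrib, sum_const, card_univ,
      nsmul_eq_mul, inner_sum, mul_sum]
  have hcs : ‖x‖ * (Fintype.card ι * ‖x‖) ≤ ‖x‖ * (2 * ‖∑ k, y k‖) := by
    nlinarith [real_inner_le_norm x (∑ k, y k)]
  rcases (norm_nonneg x).eq_or_lt with hx | hx
  · rw [← hx]; simp [norm_nonneg]
  · exact le_of_mul_le_mul_left hcs hx

theorem card_mul_norm_le_of_sum_norm_sub_le {z : E} (k₀ : ι)
    (h : ∑ k, ‖z - y k‖ ≤ ∑ k, ‖y k₀ - y k‖)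
    (hk₀ : ‖y k₀‖ ≤ ‖(Fintype.card ι : ℝ)⁻¹ • ∑ k, y k‖) :
    Fintype.card ι * ‖z‖ ≤ 3 * ∑ k, ‖y k‖ := by
  have : Nonempty ι := ⟨k₀⟩
  have hcard : (Fintype.card ι : ℝ) ≠ 0 := Nat.cast_ne_zero.mpr Fintype.card_ne_zero
  have hk₀' : Fintype.card ι * ‖y k₀‖ ≤ ∑ k, ‖y k‖ := by
    calc Fintype.card ι * ‖y k₀‖ ≤ Fintype.card ι * ‖(Fintype.card ι : ℝ)⁻¹ • ∑ k, y k‖ := by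
          gcongr
      _ = ‖∑ k, y k‖ := by
          rw [norm_smul, norm_inv, Real.norm_natCast, mul_inv_cancel_left₀ hcard]
      _ ≤ ∑ k, ‖y k‖ := norm_sum_le _ _
  calc Fintype.card ι * ‖z‖ = ∑ k, ‖(z - y k) + y k‖ := by simp
    _ ≤ ∑ k, (‖z - y k‖ + ‖y k‖) := sum_le_sum fun k _ => norm_add_le _ _
    _ ≤ ∑ k, ‖y k₀ - y k‖ + ∑ k, ‖y k‖ := by rw [sum_add_distrib]; gcongr
    _ ≤ ∑ k, (‖y k₀‖ + ‖y k‖) + ∑ k, ‖y k‖ := by gcongr with k; exact norm_sub_le _ _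
    _ ≤ 3 * ∑ k, ‖y k‖ := by
        simp only [sum_add_distrib, sum_const, card_univ, nsmul_eq_mul]
        linarith

end FrechetBounds

theorem card_mul_sq_le_of_card_mul_le_sum {ι : Type*} [Fintype ι] (f : ι → ℝ) {r c : ℝ}
    (hr : 0 ≤ r) (h : Fintype.card ι * r ≤ c * ∑ k, f k) :
    Fintype.card ι * r ^ 2 ≤ c ^ 2 * ∑ k, f k ^ 2 := by
  set N : ℝ := (Fintype.card ι : ℝ)
  have hsq : (N * r) ^ 2 ≤ N * (c ^ 2 * ∑ k, f k ^ 2) :=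
    calc (N * r) ^ 2 ≤ (c * ∑ k, f k) ^ 2 := pow_le_pow_left₀ (by positivity) h 2
      _ = c ^ 2 * (∑ k, f k) ^ 2 := mul_pow _ _ _
      _ ≤ c ^ 2 * (N * ∑ k, f k ^ 2) := by gcongr; exact sq_sum_le_card_mul_sum_sq
      _ = N * (c ^ 2 * ∑ k, f k ^ 2) := by ring
  rcases (show (0 : ℝ) ≤ N by positivity).eq_or_lt with hN | hN
  · rw [← hN, zero_mul]; positivity
  · exact le_of_mul_le_mul_left (by nlinarith) hN

theorem IsAdj.edges_le_of_card_mul_vnorm_le {n N : ℕ} (hN : 0 < N)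
    {A : Fin N → Matrix (Fin n) (Fin n) ℝ} (hadj : ∀ k, IsAdj (A k)) (hA : ∀ k, (A k).IsHermitian)
    {B : Matrix (Fin n) (Fin n) ℝ} (h : IsAdj B) (hB : B.IsHermitian) {c : ℝ}
    (hc : N * vnorm hB.eigenvalues ≤ c * ∑ k, vnorm (hA k).eigenvalues) :
    edges B ≤ c ^ 2 * ((1 : ℝ) / N * ∑ k, edges (A k)) := by
  have hsq := card_mul_sq_le_of_card_mul_le_sum (fun k => vnorm (hA k).eigenvalues)
    (r := vnorm hB.eigenvalues) (Real.sqrt_nonneg _) (by rwa [Fintype.card_fin])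
  simp only [Fintype.card_fin, h.vnorm_eigenvalues_sq, (hadj _).vnorm_eigenvalues_sq,
    ← mul_sum] at hsq
  have hN' : (0 : ℝ) < N := by exact_mod_cast hN
  rw [← mul_le_mul_iff_of_pos_left (by positivity : (0 : ℝ) < 2 * N)]
  field_simp
  linarith

theorem spectral_mean_median_edges_bound {n N : ℕ} (hN : 0 < N)
    (A : Fin N → Matrix (Fin n) (Fin n) ℝ) (hadj : ∀ k, IsAdj (A k))
    (hA : ∀ k, (A k).IsHermitian)
    (Abar : Matrix (Fin n) (Fin n) ℝ) (hAbaradj : IsAdj Abar)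
    (hAbar : Abar.IsHermitian)
    (hmean : ∀ (B : Matrix (Fin n) (Fin n) ℝ), IsAdj B → ∀ hB : B.IsHermitian,
      ∑ k : Fin N, (vnorm (hAbar.eigenvalues - (hA k).eigenvalues)) ^ 2 ≤
        ∑ k : Fin N, (vnorm (hB.eigenvalues - (hA k).eigenvalues)) ^ 2)
    (M : Matrix (Fin n) (Fin n) ℝ) (hMadj : IsAdj M) (hM : M.IsHermitian)
    (hmed : ∀ (B : Matrix (Fin n) (Fin n) ℝ), IsAdj B → ∀ hB : B.IsHermitian,
      ∑ k : Fin N, vnorm (hM.eigenvalues - (hA k).eigenvalues) ≤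
        ∑ k : Fin N, vnorm (hB.eigenvalues - (hA k).eigenvalues))
    (hk₀ : ∃ k₀ : Fin N, vnorm ((hA k₀).eigenvalues) ≤
      vnorm (fun i => (1 : ℝ) / N * ∑ k : Fin N, (hA k).eigenvalues i)) :
    max (edges Abar) (edges M) ≤
      9 * ((1 : ℝ) / N * ∑ k : Fin N, edges (A k)) := by
  obtain ⟨k₀, hk₀⟩ := hk₀
  have hmean_norm : N * vnorm hAbar.eigenvalues ≤ 2 * ∑ k, vnorm (hA k).eigenvalues := by
    have h := hmean 0 isAdj_zero Matrix.isHermitian_zero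
    rw [Matrix.isHermitian_zero.eigenvalues_eq_zero_iff.mpr rfl] at h
    simp only [zero_sub, vnorm_eq_norm_toLp, WithLp.toLp_sub, WithLp.toLp_neg, norm_neg] at h ⊢
    simpa using (card_mul_norm_le_of_sum_norm_sub_sq_le _ h).trans
      (mul_le_mul_of_nonneg_left (norm_sum_le _ _) zero_le_two)
  have hmed_norm : N * vnorm hM.eigenvalues ≤ 3 * ∑ k, vnorm (hA k).eigenvalues := by
    have h := hmed (A k₀) (hadj k₀) (hA k₀)
    have hmean_toLp : WithLp.toLp 2 (fun i => (1 : ℝ) / N * ∑ k, (hA k).eigenvalues i) =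
        (N : ℝ)⁻¹ • ∑ k, WithLp.toLp 2 (hA k).eigenvalues := by
      ext i; simp [mul_sum]
    simp only [vnorm_eq_norm_toLp, WithLp.toLp_sub, hmean_toLp] at h hk₀ ⊢
    simpa using card_mul_norm_le_of_sum_norm_sub_le _ k₀ h (by simpa using hk₀)
  have hE : 0 ≤ (1 : ℝ) / N * ∑ k, edges (A k) :=
    mul_nonneg (by positivity) (sum_nonneg fun k _ => (hadj k).edges_nonneg)
  refine max_le ?_ ((hMadj.edges_le_of_card_mul_vnorm_le hN hadj hA hM hmed_norm).trans_eq
    (by norm_num))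
  calc edges Abar ≤ 2 ^ 2 * ((1 : ℝ) / N * ∑ k, edges (A k)) :=
        hAbaradj.edges_le_of_card_mul_vnorm_le hN hadj hA hAbar hmean_norm
    _ ≤ 9 * ((1 : ℝ) / N * ∑ k, edges (A k)) := mul_le_mul_of_nonneg_right (by norm_num) hE
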